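/- (Hahn–Lu comparison theorem for weighted Bergman metrics, Theorem 3.4 in minimum-integral form.) Let n ≥ 1, let Ω ⊆ ℂⁿ be a nonempty bounded open set, let w : ℂⁿ → [0,∞) be a measurable weight that is admissible on Ω with ∫_Ω w dλ < ∞, let p ∈ Ω, and let X ∈ ℂⁿ. Define the Carathéodory length C_Ω(p;X) := sup{|(fderiv ℂ f p) X| : f : ℂⁿ → ℂ holomorphic on Ω, |f(z)| < 1 for all z ∈ Ω, f(p) = 0}. Then C_Ω(p;X)² · I¹_{Ω,w}(p;X) ≤ I⁰_{Ω,w}(p) (the product taken in [0,∞]); equivalently, the Carathéodory length at p in direction X is at most the weighted Bergman length I⁰_{Ω,w}(p)/I¹_{Ω,w}(p;X) of X at p. -/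

import Mathlib

open MeasureTheory Complex
open scoped ENNReal NNReal

noncomputable section

/-- `ℂⁿ` as Euclidean space. -/
abbrev Cn (n : ℕ) := EuclideanSpace ℂ (Fin n)

instance (n : ℕ) : MeasurableSpace (Cn n) :=
  MeasurableSpace.comap (WithLp.ofLp : Cn n → (Fin n → ℂ)) (inferInstance : MeasurableSpace (Fin n → ℂ))

instance (n : ℕ) : MeasureSpace (Cn n) :=
  ⟨Measure.map (WithLp.toLp 2 : (Fin n → ℂ) → Cn n) (volume : Measure (Fin n → ℂ))⟩

/-- The squared weighted `L²` norm `‖u‖²_{Ω,w} = ∫_Ω |u|² w dλ`, valued in `[0,∞]`. -/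
def wNormSq (n : ℕ) (Ω : Set (Cn n)) (w : Cn n → ℝ) (u : Cn n → ℂ) : ℝ≥0∞ :=
  ∫⁻ z in Ω, ENNReal.ofReal (‖u z‖ ^ 2 * w z)

/-- A competitor: holomorphic on `Ω` with finite weighted squared norm. -/
def IsCompetitor (n : ℕ) (Ω : Set (Cn n)) (w : Cn n → ℝ) (u : Cn n → ℂ) : Prop :=
  DifferentiableOn ℂ u Ω ∧ wNormSq n Ω w u < ⊤

/-- Minimum integral `I⁰_{Ω,w}(p)`. -/
def I0 (n : ℕ) (Ω : Set (Cn n)) (w : Cn n → ℝ) (p : Cn n) : ℝ≥0∞ :=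
  sInf {t | ∃ u, IsCompetitor n Ω w u ∧ u p = 1 ∧ t = wNormSq n Ω w u}

/-- Minimum integral `I¹_{Ω,w}(p;X)`. -/
def I1 (n : ℕ) (Ω : Set (Cn n)) (w : Cn n → ℝ) (p : Cn n) (X : Cn n) : ℝ≥0∞ :=
  sInf {t | ∃ u, IsCompetitor n Ω w u ∧ u p = 0 ∧ fderiv ℂ u p X = 1 ∧
    t = wNormSq n Ω w u}

/-- Minimum integral `I¹_{Ω,w}(p;X|Y)`. -/
def I1cond (n : ℕ) (Ω : Set (Cn n)) (w : Cn n → ℝ) (p : Cn n) (X Y : Cn n) : ℝ≥0∞ :=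
  sInf {t | ∃ u, IsCompetitor n Ω w u ∧ u p = 0 ∧ fderiv ℂ u p Y = 0 ∧
    fderiv ℂ u p X = 1 ∧ t = wNormSq n Ω w u}

/-- Minimum integral `I¹_{Ω,w}(p;∂_k|_{<k})`. -/
def I1flag (n : ℕ) (Ω : Set (Cn n)) (w : Cn n → ℝ) (p : Cn n) (k : Fin n) : ℝ≥0∞ :=
  sInf {t | ∃ u, IsCompetitor n Ω w u ∧ u p = 0 ∧
    (∀ j : Fin n, j < k → fderiv ℂ u p (EuclideanSpace.single j (1 : ℂ)) = 0) ∧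
    fderiv ℂ u p (EuclideanSpace.single k (1 : ℂ)) = 1 ∧ t = wNormSq n Ω w u}

/-- Minimum integral `I²_{Ω,w}(p;X,Y)`. -/
def I2 (n : ℕ) (Ω : Set (Cn n)) (w : Cn n → ℝ) (p : Cn n) (X Y : Cn n) : ℝ≥0∞ :=
  sInf {t | ∃ u, IsCompetitor n Ω w u ∧ u p = 0 ∧ fderiv ℂ u p = 0 ∧
    fderiv ℂ (fun z => fderiv ℂ u z Y) p X = 1 ∧ t = wNormSq n Ω w u}

/-- Admissibility of a weight on `Ω`: a Cauchy-type estimate on compact subsets. -/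
def Admissible (n : ℕ) (Ω : Set (Cn n)) (w : Cn n → ℝ) : Prop :=
  ∀ A : Set (Cn n), IsCompact A → A ⊆ Ω →
    ∃ C > (0 : ℝ), ∀ u, IsCompetitor n Ω w u → ∀ z ∈ A,
      ‖u z‖ ≤ C * Real.sqrt ((wNormSq n Ω w u).toReal)

/-- The Hermitian inner product `⟨X,Y⟩ = Σ_j X_j conj(Y_j)`. -/
def herm (n : ℕ) (X Y : Cn n) : ℂ := ∑ j, X j * (starRingEnd ℂ) (Y j)

/-- The Kähler–Einstein weight of the ball of radius `r`. -/
def keWeight (n m : ℕ) (r : ℝ) (z : Cn n) : ℝ :=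
  if ‖z‖ < r then
    ((n + 1 : ℝ) / r ^ 2) ^ (-(((m : ℤ) - 1) * (n : ℤ))) *
      ((r ^ 2 - ‖z‖ ^ 2) / r ^ 2) ^ ((m - 1) * (n + 1))
  else 0

/-- The constant `C_m`. -/
def Cm (n m : ℕ) : ℝ :=
  Real.pi ^ n / (n + 1 : ℝ) ^ ((m - 1) * n) *
    (Nat.factorial ((m - 1) * (n + 1)) : ℝ) / (Nat.factorial (m * (n + 1) - 1) : ℝ)

end

instance (n : ℕ) : BorelSpace (Cn n) :=
  ⟨(PiLp.borelSpace 2 (X := fun _ : Fin n => ℂ)).measurable_eq⟩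

/-- Hahn–Lu comparison theorem for weighted Bergman metrics (Theorem 3.4). -/
theorem hahn_lu_comparison {n : ℕ} (hn : 1 ≤ n)
    (Ω : Set (Cn n)) (hΩo : IsOpen Ω) (hne : Ω.Nonempty) (hbd : Bornology.IsBounded Ω)
    (w : Cn n → ℝ) (hwm : Measurable w) (hw0 : ∀ z, 0 ≤ w z)
    (hadm : Admissible n Ω w)
    (hwint : (∫⁻ z in Ω, ENNReal.ofReal (w z)) < ⊤)
    (p : Cn n) (hp : p ∈ Ω) (X : Cn n)
    (C : ℝ≥0∞)
    (hC : C = sSup {t | ∃ f : Cn n → ℂ, DifferentiableOn ℂ f Ω ∧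
      (∀ z ∈ Ω, ‖f z‖ < 1) ∧ f p = 0 ∧ t = ENNReal.ofReal ‖fderiv ℂ f p X‖}) :
    C ^ 2 * I1 n Ω w p X ≤ I0 n Ω w p := by
  set S := {t | ∃ f : Cn n → ℂ, DifferentiableOn ℂ f Ω ∧
      (∀ z ∈ Ω, ‖f z‖ < 1) ∧ f p = 0 ∧ t = ENNReal.ofReal ‖fderiv ℂ f p X‖} with hS
  -- key estimate: for each Carathéodory function f, t² * I1 ≤ I0
  have key : ∀ t ∈ S, t * t * I1 n Ω w p X ≤ I0 n Ω w p := by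
    rintro t ⟨f, hf, hf1, hfp, rfl⟩
    set a : ℂ := fderiv ℂ f p X with ha
    by_cases ha0 : a = 0
    · simp [ha0]
    have hapos : 0 < ‖a‖ := norm_pos_iff.mpr ha0
    refine le_sInf ?_
    rintro s ⟨u, ⟨hu, huN⟩, hup, rfl⟩
    -- the competitor v = a⁻¹ • (f * u)
    set v : Cn n → ℂ := fun z => a⁻¹ * (f z * u z) with hv
    have hvdiff : DifferentiableOn ℂ v Ω := (hf.mul hu).const_mul a⁻¹
    have hfa : DifferentiableAt ℂ f p := hf.differentiableAt (hΩo.mem_nhds hp)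
    have hua : DifferentiableAt ℂ u p := hu.differentiableAt (hΩo.mem_nhds hp)
    have hvp : v p = 0 := by simp [hv, hfp]
    have hdv : fderiv ℂ v p X = 1 := by
      have h1 : fderiv ℂ v p = a⁻¹ • fderiv ℂ (fun z => f z * u z) p :=
        fderiv_const_mul (hfa.mul hua) a⁻¹
      have h2 : fderiv ℂ (fun z => f z * u z) p
          = f p • fderiv ℂ u p + u p • fderiv ℂ f p := fderiv_mul hfa hua
      rw [h1, h2, hfp, hup]
      simp [← ha, inv_mul_cancel₀ ha0]
    -- norm estimate
    have hnorm : wNormSq n Ω w v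
        ≤ ENNReal.ofReal (‖a‖⁻¹ ^ 2) * wNormSq n Ω w u := by
      rw [wNormSq, wNormSq, ← lintegral_const_mul' _ _ ENNReal.ofReal_ne_top]
      refine lintegral_mono_ae (ae_restrict_of_forall_mem hΩo.measurableSet ?_)
      intro z hz
      rw [← ENNReal.ofReal_mul (by positivity)]
      apply ENNReal.ofReal_le_ofReal
      have h1 : ‖v z‖ ≤ ‖a‖⁻¹ * ‖u z‖ := by
        have : ‖v z‖ = ‖a‖⁻¹ * (‖f z‖ * ‖u z‖) := by
          simp [hv, norm_mul]
        rw [this]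
        have hfz : ‖f z‖ ≤ 1 := (hf1 z hz).le
        have := mul_le_of_le_one_left (norm_nonneg (u z)) hfz
        have h0 : (0:ℝ) ≤ ‖a‖⁻¹ := by positivity
        nlinarith [norm_nonneg (u z)]
      have h2 : ‖v z‖ ^ 2 ≤ ‖a‖⁻¹ ^ 2 * ‖u z‖ ^ 2 := by
        have h0 : (0:ℝ) ≤ ‖v z‖ := norm_nonneg _
        nlinarith [norm_nonneg (u z), inv_nonneg.mpr (norm_nonneg a)]
      have := mul_le_mul_of_nonneg_right h2 (hw0 z)
      linarith
    have hvfin : wNormSq n Ω w v < ⊤ :=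
      lt_of_le_of_lt hnorm (ENNReal.mul_lt_top ENNReal.ofReal_lt_top huN)
    have hI1le : I1 n Ω w p X ≤ wNormSq n Ω w v :=
      sInf_le ⟨v, ⟨hvdiff, hvfin⟩, hvp, hdv, rfl⟩
    calc ENNReal.ofReal ‖a‖ * ENNReal.ofReal ‖a‖ * I1 n Ω w p X
        ≤ ENNReal.ofReal ‖a‖ * ENNReal.ofReal ‖a‖ *
            (ENNReal.ofReal (‖a‖⁻¹ ^ 2) * wNormSq n Ω w u) :=
          mul_le_mul_right (hI1le.trans hnorm) _
      _ = (ENNReal.ofReal (‖a‖ * ‖a‖ * ‖a‖⁻¹ ^ 2)) * wNormSq n Ω w u := by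
          rw [← ENNReal.ofReal_mul (norm_nonneg a),
            ← mul_assoc, ← ENNReal.ofReal_mul (by positivity)]
      _ = wNormSq n Ω w u := by
          rw [show ‖a‖ * ‖a‖ * ‖a‖⁻¹ ^ 2 = (‖a‖ * ‖a‖⁻¹) ^ 2 by ring,
            mul_inv_cancel₀ hapos.ne', one_pow, ENNReal.ofReal_one, one_mul]
  -- pass to the supremum
  have key2 : ∀ s ∈ S, ∀ t ∈ S, s * t * I1 n Ω w p X ≤ I0 n Ω w p := by
    intro s hs t ht
    rcases le_total s t with h | h
    · exact le_trans (mul_le_mul_left (mul_le_mul_left h t) _) (key t ht)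
    · exact le_trans (mul_le_mul_left (mul_le_mul_right h s) _) (key s hs)
  rw [hC, sq, mul_assoc, ENNReal.sSup_mul]
  refine iSup₂_le fun s hs => ?_
  rw [show s * (sSup S * I1 n Ω w p X) = sSup S * (s * I1 n Ω w p X) by ring,
    ENNReal.sSup_mul]
  refine iSup₂_le fun t ht => ?_
  rw [show t * (s * I1 n Ω w p X) = s * t * I1 n Ω w p X by ring]
  exact key2 s hs t ht
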